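/- arXiv:2003.00231 — 2 statements merged into one kernel-verified Lean document; each statement's English description precedes it below -/
import Mathlib

section
/- Let 0 < β_1 < 1, 0 < β_2 < 1 with μ := β_1/√β_2 < 1. Fix i and reals d_1,…,d_T (not all components zero at each step in the sense that ∑_{j=1}^t β_2^{t-j} d_j² > 0 whenever needed). Define m_t = ∑_{j=1}^t (1-β_{1j}) (∏_{k=j+1}^t β_{1k}) d_j with 0 < β_{1j} ≤ β_1, and v_t = (1-β_2) ∑_{j=1}^t β_2^{t-j} d_j². Then (∑_{j=1}^t (∏_{k=j+1}^t β_{1k}) d_j)² / √(v_t/(1-β_2)) ≤ (1/(1-β_1)) ∑_{j=1}^t β_1^{t-j} d_j² / √(β_2^{t-j} d_j²) = (1/(1-β_1)) ∑_{j=1}^t μ^{t-j} |d_j|. -/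
/-!
Write `b j = ∏_{k=j+1}^t β₁ₖ ≤ β₁^(t-j)`. Cauchy–Schwarz with weights `b j`, the comparison
`b j ≤ β₁^(t-j)` and the geometric series `∑ β₁^(t-j) ≤ 1/(1-β₁)` bound the squared numerator by
`(1/(1-β₁)) ∑ β₁^(t-j) d_j²`. Each term is then divided by the whole sum `∑ β₂^(t-j) d_j²` under the
square root, which is at least its own `j`-th summand; finally
`β₁^n d² / √(β₂^n d²) = (β₁/√β₂)^n |d|`.
-/

open Finset

lemma sq_sum_mul_le_sum_mul_sum_sq {ι : Type*} (s : Finset ι) {w c : ι → ℝ}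
    (hw : ∀ i ∈ s, 0 ≤ w i) (hwc : ∀ i ∈ s, w i ≤ c i) (f : ι → ℝ) :
    (∑ i ∈ s, w i * f i) ^ 2 ≤ (∑ i ∈ s, c i) * ∑ i ∈ s, c i * f i ^ 2 := by
  refine sum_sq_le_sum_mul_sum_of_sq_le_mul s (fun i hi => (hw i hi).trans (hwc i hi))
    (fun i hi => mul_nonneg ((hw i hi).trans (hwc i hi)) (sq_nonneg _)) fun i hi => ?_
  have hw2 : w i ^ 2 ≤ c i ^ 2 := pow_le_pow_left₀ (hw i hi) (hwc i hi) 2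
  nlinarith [sq_nonneg (f i)]

lemma sum_Icc_pow_sub_le {β : ℝ} (hβ0 : 0 ≤ β) (hβ1 : β < 1) (t : ℕ) :
    ∑ j ∈ Icc 1 t, β ^ (t - j) ≤ 1 / (1 - β) := by
  have hreflect : ∑ j ∈ Icc 1 t, β ^ (t - j) = ∑ i ∈ Ico 0 t, β ^ i := by
    rw [← Ico_add_one_right_eq_Icc, sum_Ico_reflect (fun i => β ^ i) 1 le_rfl]
    simp
  simpa [hreflect] using geom_sum_Ico_le_of_lt_one (m := 0) (n := t) hβ0 hβ1

lemma prod_Icc_le_pow_sub {β : ℝ} {a : ℕ → ℝ} (ha0 : ∀ k, 0 ≤ a k) (haβ : ∀ k, a k ≤ β)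
    (j t : ℕ) : ∏ k ∈ Icc (j + 1) t, a k ≤ β ^ (t - j) := by
  calc ∏ k ∈ Icc (j + 1) t, a k ≤ ∏ _k ∈ Icc (j + 1) t, β :=
        prod_le_prod (fun k _ => ha0 k) (fun k _ => haβ k)
    _ = β ^ (t - j) := by rw [prod_const, Nat.card_Icc, Nat.add_sub_add_right]

lemma sq_sum_prod_Icc_mul_le {β : ℝ} {a : ℕ → ℝ} (hβ1 : β < 1) (ha0 : ∀ k, 0 ≤ a k)
    (haβ : ∀ k, a k ≤ β) (t : ℕ) (d : ℕ → ℝ) :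
    (∑ j ∈ Icc 1 t, (∏ k ∈ Icc (j + 1) t, a k) * d j) ^ 2 ≤
      1 / (1 - β) * ∑ j ∈ Icc 1 t, β ^ (t - j) * d j ^ 2 := by
  have hβ0 : 0 ≤ β := (ha0 0).trans (haβ 0)
  calc _ ≤ (∑ j ∈ Icc 1 t, β ^ (t - j)) * ∑ j ∈ Icc 1 t, β ^ (t - j) * d j ^ 2 :=
        sq_sum_mul_le_sum_mul_sum_sq _ (fun j _ => prod_nonneg fun k _ => ha0 k)
          (fun j _ => prod_Icc_le_pow_sub ha0 haβ j t) d
    _ ≤ _ := by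
        gcongr ?_ * _
        exact sum_Icc_pow_sub_le hβ0 hβ1 t

lemma Real.sqrt_pow_of_nonneg {b : ℝ} (hb : 0 ≤ b) (n : ℕ) : √(b ^ n) = √b ^ n := by
  rw [Real.sqrt_eq_iff_eq_sq (by positivity) (by positivity), ← pow_mul, mul_comm, pow_mul,
    Real.sq_sqrt hb]

lemma mul_sq_div_sqrt_le {c y W x : ℝ} (hc : 0 ≤ c) (hy : 0 < y) (hW : y * x ^ 2 ≤ W) :
    c * x ^ 2 / √W ≤ c * x ^ 2 / √(y * x ^ 2) := by
  rcases eq_or_ne x 0 with rfl | hx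
  · simp
  · exact div_le_div_of_nonneg_left (by positivity) (by positivity) (Real.sqrt_le_sqrt hW)

lemma pow_mul_sq_div_sqrt_pow_mul_sq {a b : ℝ} (hb : 0 ≤ b) (n : ℕ) (x : ℝ) :
    a ^ n * x ^ 2 / √(b ^ n * x ^ 2) = (a / √b) ^ n * |x| := by
  rw [Real.sqrt_mul (pow_nonneg hb n), Real.sqrt_pow_of_nonneg hb, Real.sqrt_sq_eq_abs,
    ← sq_abs x, div_pow]
  rcases eq_or_ne x 0 with rfl | hx
  · simp
  · have : |x| ≠ 0 := abs_ne_zero.mpr hx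
    field_simp

theorem stmt_6_general (t : ℕ) (β₁ β₂ : ℝ)
    (hβ₁0 : 0 < β₁) (hβ₁1 : β₁ < 1) (hβ₂0 : 0 < β₂)
    (μ : ℝ) (hμ : μ = β₁ / Real.sqrt β₂)
    (β₁j : ℕ → ℝ) (hβ₁jpos : ∀ j, 0 < β₁j j) (hβ₁jle : ∀ j, β₁j j ≤ β₁)
    (d : ℕ → ℝ) :
    (∑ j ∈ Finset.Icc 1 t, (∏ k ∈ Finset.Icc (j + 1) t, β₁j k) * d j) ^ 2 /
        Real.sqrt (∑ j ∈ Finset.Icc 1 t, β₂ ^ (t - j) * (d j) ^ 2) ≤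
      (1 / (1 - β₁)) *
        ∑ j ∈ Finset.Icc 1 t, β₁ ^ (t - j) * (d j) ^ 2 /
          Real.sqrt (β₂ ^ (t - j) * (d j) ^ 2) ∧
    (1 / (1 - β₁)) *
        ∑ j ∈ Finset.Icc 1 t, β₁ ^ (t - j) * (d j) ^ 2 /
          Real.sqrt (β₂ ^ (t - j) * (d j) ^ 2) =
      (1 / (1 - β₁)) * ∑ j ∈ Finset.Icc 1 t, μ ^ (t - j) * |d j| := by
  refine ⟨?_, by simp_rw [hμ, pow_mul_sq_div_sqrt_pow_mul_sq hβ₂0.le]⟩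
  calc _ ≤ (1 / (1 - β₁) * ∑ j ∈ Icc 1 t, β₁ ^ (t - j) * d j ^ 2) /
          √(∑ j ∈ Icc 1 t, β₂ ^ (t - j) * d j ^ 2) := by
        gcongr
        exact sq_sum_prod_Icc_mul_le hβ₁1 (fun k => (hβ₁jpos k).le) hβ₁jle t d
    _ = 1 / (1 - β₁) * ∑ j ∈ Icc 1 t,
          β₁ ^ (t - j) * d j ^ 2 / √(∑ j ∈ Icc 1 t, β₂ ^ (t - j) * d j ^ 2) := by
        rw [mul_div_assoc, sum_div]
    _ ≤ _ := by
        refine mul_le_mul_of_nonneg_left (sum_le_sum fun j hj => ?_) (by positivity)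
        exact mul_sq_div_sqrt_le (by positivity) (by positivity)
          (single_le_sum (f := fun i => β₂ ^ (t - i) * d i ^ 2) (fun i _ => by positivity) hj)

theorem stmt_6 (t : ℕ) (ht : 1 ≤ t) (β₁ β₂ : ℝ)
    (hβ₁0 : 0 < β₁) (hβ₁1 : β₁ < 1) (hβ₂0 : 0 < β₂) (hβ₂1 : β₂ < 1)
    (μ : ℝ) (hμ : μ = β₁ / Real.sqrt β₂) (hμ1 : μ < 1)
    (β₁j : ℕ → ℝ) (hβ₁jpos : ∀ j, 0 < β₁j j) (hβ₁jle : ∀ j, β₁j j ≤ β₁)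
    (d : ℕ → ℝ) (hdne : ∀ j, 1 ≤ j → j ≤ t → d j ≠ 0) :
    (∑ j ∈ Finset.Icc 1 t, (∏ k ∈ Finset.Icc (j + 1) t, β₁j k) * d j) ^ 2 /
        Real.sqrt (∑ j ∈ Finset.Icc 1 t, β₂ ^ (t - j) * (d j) ^ 2) ≤
      (1 / (1 - β₁)) *
        ∑ j ∈ Finset.Icc 1 t, β₁ ^ (t - j) * (d j) ^ 2 /
          Real.sqrt (β₂ ^ (t - j) * (d j) ^ 2) ∧
    (1 / (1 - β₁)) *
        ∑ j ∈ Finset.Icc 1 t, β₁ ^ (t - j) * (d j) ^ 2 /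
          Real.sqrt (β₂ ^ (t - j) * (d j) ^ 2) =
      (1 / (1 - β₁)) * ∑ j ∈ Finset.Icc 1 t, μ ^ (t - j) * |d j| :=
  stmt_6_general t β₁ β₂ hβ₁0 hβ₁1 hβ₂0 μ hμ β₁j hβ₁jpos hβ₁jle d
end

section
/- Let 0 < β_1 < 1, 0 < β_2 < 1, μ := β_1/√β_2 < 1, α > 0, and α_t := α/√t. Let (d_t)_{t=1}^T ⊂ R^N, and for each coordinate i define m_{t,i} = ∑_{j=1}^t (1-β_{1j})(∏_{k=j+1}^t β_{1k}) d_{j,i} (with β_{1j} ≤ β_1), v_{t,i} = (1-β_2)∑_{j=1}^t β_2^{t-j} d_{j,i}², and v̂_{t,i} = max_{s≤t} v_{s,i}. Then for any l ∈ {0,1,…,T-2}, ∑_{t=l+1}^T α_t ∑_{i=1}^N m_{t-l,i}²/√(v̂_{t,i}) ≤ (α √(1+log T)) / ((1-β_1)(1-μ)√(1-β_2)) · ∑_{i=1}^N √(∑_{t=1}^T d_{t,i}²). -/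
lemma geom_aux {x : ℝ} (h0 : 0 ≤ x) (h1 : x < 1) (n : ℕ) :
    ∑ i ∈ Finset.range n, x ^ i ≤ 1 / (1 - x) := by
  have hx : (0:ℝ) < 1 - x := by linarith
  rw [geom_sum_eq (by linarith : x ≠ 1)]
  have heq : (x ^ n - 1) / (x - 1) = (1 - x ^ n) / (1 - x) := by
    rw [div_eq_div_iff (by linarith) (by linarith)]; ring
  rw [heq]
  have hp : 0 ≤ x ^ n := pow_nonneg h0 n
  exact div_le_div₀ (by norm_num) (by linarith) hx le_rfl

lemma sum_pow_sub_le {x : ℝ} (h0 : 0 ≤ x) (h1 : x < 1) (n : ℕ) :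
    ∑ j ∈ Finset.Icc 1 n, x ^ (n - j) ≤ 1 / (1 - x) := by
  have key : ∑ j ∈ Finset.Icc 1 n, x ^ (n - j) = ∑ i ∈ Finset.range n, x ^ i := by
    rw [← Finset.Ico_add_one_right_eq_Icc, Finset.sum_Ico_eq_sum_range]
    have h1' : n + 1 - 1 = n := by omega
    rw [h1', ← Finset.sum_range_reflect (fun i => x ^ i) n]
    exact Finset.sum_congr rfl fun i _ => by congr 1; omega
  rw [key]; exact geom_aux h0 h1 n

lemma sum_pow_Icc_le {x : ℝ} (h0 : 0 ≤ x) (h1 : x < 1) (a T : ℕ) :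
    ∑ t ∈ Finset.Icc a T, x ^ (t - a) ≤ 1 / (1 - x) := by
  have key : ∑ t ∈ Finset.Icc a T, x ^ (t - a) = ∑ i ∈ Finset.range (T + 1 - a), x ^ i := by
    rw [← Finset.Ico_add_one_right_eq_Icc, Finset.sum_Ico_eq_sum_range]
    exact Finset.sum_congr rfl fun i _ => by rw [Nat.add_sub_cancel_left]
  rw [key]; exact geom_aux h0 h1 _

lemma sqrt_pow' {x : ℝ} (h : 0 ≤ x) (n : ℕ) :
    Real.sqrt (x ^ n) = (Real.sqrt x) ^ n := by
  have h2 : ((Real.sqrt x) ^ n) ^ 2 = x ^ n := by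
    rw [← pow_mul, mul_comm, pow_mul, Real.sq_sqrt h]
  rw [← h2, Real.sqrt_sq (pow_nonneg (Real.sqrt_nonneg x) n)]

theorem stmt_7 (N T : ℕ) (hT : 2 ≤ T) (α β₁ β₂ μ : ℝ)
    (hα : 0 < α) (hβ₁0 : 0 < β₁) (hβ₁1 : β₁ < 1) (hβ₂0 : 0 < β₂) (hβ₂1 : β₂ < 1)
    (hμ : μ = β₁ / Real.sqrt β₂) (hμ1 : μ < 1)
    (β₁t : ℕ → ℝ) (hβ₁tpos : ∀ t, 0 < β₁t t) (hβ₁tle : ∀ t, β₁t t ≤ β₁)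
    (d m v vhat : ℕ → Fin N → ℝ)
    (hm : ∀ t : ℕ, 1 ≤ t → ∀ i, m t i =
      ∑ j ∈ Finset.Icc 1 t,
        (1 - β₁t j) * (∏ k ∈ Finset.Icc (j + 1) t, β₁t k) * d j i)
    (hv : ∀ t : ℕ, 1 ≤ t → ∀ i, v t i =
      (1 - β₂) * ∑ j ∈ Finset.Icc 1 t, β₂ ^ (t - j) * (d j i) ^ 2)
    (hvhat : ∀ t : ℕ, ∀ ht : 1 ≤ t, ∀ i,
      vhat t i = (Finset.Icc 1 t).sup' (Finset.nonempty_Icc.mpr ht) (fun s => v s i))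
    (hvhatpos : ∀ t : ℕ, 1 ≤ t → ∀ i, 0 < vhat t i)
    (l : ℕ) (hl : l ≤ T - 2) :
    ∑ t ∈ Finset.Icc (l + 1) T,
        (α / Real.sqrt t) * ∑ i : Fin N, (m (t - l) i) ^ 2 / Real.sqrt (vhat t i) ≤
      (α * Real.sqrt (1 + Real.log T)) /
          ((1 - β₁) * (1 - μ) * Real.sqrt (1 - β₂)) *
        ∑ i : Fin N, Real.sqrt (∑ t ∈ Finset.Icc 1 T, (d t i) ^ 2) := by
  have h1β₁ : (0:ℝ) < 1 - β₁ := by linarith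
  have h1β₂ : (0:ℝ) < 1 - β₂ := by linarith
  have hsβ₂ : 0 < Real.sqrt β₂ := Real.sqrt_pos.mpr hβ₂0
  have hμ0 : 0 ≤ μ := by rw [hμ]; positivity
  have h1μ : (0:ℝ) < 1 - μ := by linarith
  have hs1β₂ : 0 < Real.sqrt (1 - β₂) := Real.sqrt_pos.mpr h1β₂
  set C₁ : ℝ := 1 / ((1 - β₁) * Real.sqrt (1 - β₂)) with hC₁def
  have hC₁ : 0 < C₁ := by positivity
  -- key pointwise bound
  have key : ∀ t : ℕ, l + 1 ≤ t → t ≤ T → ∀ i : Fin N,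
      (m (t - l) i) ^ 2 / Real.sqrt (vhat t i) ≤
        C₁ * ∑ j ∈ Finset.Icc 1 (t - l), μ ^ (t - l - j) * |d j i| := by
    intro t ht1 ht2 i
    set n := t - l with hndef
    have hn1 : 1 ≤ n := by omega
    have hnt : n ≤ t := by omega
    have ht1' : 1 ≤ t := by omega
    set a : ℕ → ℝ := fun j => (1 - β₁t j) * ∏ k ∈ Finset.Icc (j + 1) n, β₁t k with hadef
    have ha0 : ∀ j, 0 ≤ a j := fun j =>
      mul_nonneg (by have := hβ₁tle j; linarith) (Finset.prod_nonneg fun k _ => (hβ₁tpos k).le)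
    have hab : ∀ j, a j ≤ β₁ ^ (n - j) := by
      intro j
      have hprodnn : 0 ≤ ∏ k ∈ Finset.Icc (j + 1) n, β₁t k :=
        Finset.prod_nonneg fun k _ => (hβ₁tpos k).le
      have hprod : ∏ k ∈ Finset.Icc (j + 1) n, β₁t k ≤ β₁ ^ (n - j) := by
        calc ∏ k ∈ Finset.Icc (j + 1) n, β₁t k
            ≤ ∏ k ∈ Finset.Icc (j + 1) n, β₁ :=
              Finset.prod_le_prod (fun k _ => (hβ₁tpos k).le) (fun k _ => hβ₁tle k)
          _ = β₁ ^ (n - j) := by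
              rw [Finset.prod_const, Nat.card_Icc]; congr 1; omega
      calc a j ≤ 1 * ∏ k ∈ Finset.Icc (j + 1) n, β₁t k :=
            mul_le_mul_of_nonneg_right (by have := hβ₁tpos j; linarith) hprodnn
        _ ≤ β₁ ^ (n - j) := by rw [one_mul]; exact hprod
    have hmn : m n i = ∑ j ∈ Finset.Icc 1 n, a j * d j i := hm n hn1 i
    have hCS : (m n i) ^ 2 ≤
        (∑ j ∈ Finset.Icc 1 n, a j) * (∑ j ∈ Finset.Icc 1 n, a j * (d j i) ^ 2) := by
      have h := Finset.sum_mul_sq_le_sq_mul_sq (Finset.Icc 1 n)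
        (fun j => Real.sqrt (a j)) (fun j => Real.sqrt (a j) * d j i)
      have e1 : ∀ j, Real.sqrt (a j) * (Real.sqrt (a j) * d j i) = a j * d j i := fun j => by
        rw [← mul_assoc, Real.mul_self_sqrt (ha0 j)]
      have e2 : ∀ j, (Real.sqrt (a j)) ^ 2 = a j := fun j => Real.sq_sqrt (ha0 j)
      have e3 : ∀ j, (Real.sqrt (a j) * d j i) ^ 2 = a j * (d j i) ^ 2 := fun j => by
        rw [mul_pow, e2]
      calc (m n i) ^ 2
          = (∑ j ∈ Finset.Icc 1 n, Real.sqrt (a j) * (Real.sqrt (a j) * d j i)) ^ 2 := by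
            rw [hmn]; congr 1; exact Finset.sum_congr rfl fun j _ => (e1 j).symm
        _ ≤ (∑ j ∈ Finset.Icc 1 n, (Real.sqrt (a j)) ^ 2) *
              (∑ j ∈ Finset.Icc 1 n, (Real.sqrt (a j) * d j i) ^ 2) := h
        _ = _ := by
            congr 1
            · exact Finset.sum_congr rfl fun j _ => e2 j
            · exact Finset.sum_congr rfl fun j _ => e3 j
    have hS1 : ∑ j ∈ Finset.Icc 1 n, a j ≤ 1 / (1 - β₁) :=
      (Finset.sum_le_sum fun j _ => hab j).trans (sum_pow_sub_le hβ₁0.le hβ₁1 n)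
    have hS2 : ∑ j ∈ Finset.Icc 1 n, a j * (d j i) ^ 2 ≤
        ∑ j ∈ Finset.Icc 1 n, β₁ ^ (n - j) * (d j i) ^ 2 :=
      Finset.sum_le_sum fun j _ => mul_le_mul_of_nonneg_right (hab j) (sq_nonneg _)
    have hS2nn : 0 ≤ ∑ j ∈ Finset.Icc 1 n, a j * (d j i) ^ 2 :=
      Finset.sum_nonneg fun j _ => mul_nonneg (ha0 j) (sq_nonneg _)
    have hvh : 0 < Real.sqrt (vhat t i) := Real.sqrt_pos.mpr (hvhatpos t ht1' i)
    have hperj : ∀ j ∈ Finset.Icc 1 n,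
        β₁ ^ (n - j) * (d j i) ^ 2 / Real.sqrt (vhat t i) ≤
          μ ^ (n - j) * |d j i| / Real.sqrt (1 - β₂) := by
      intro j hj
      rcases eq_or_ne (d j i) 0 with h0 | h0
      · simp [h0]
      · have hD : 0 < |d j i| := abs_pos.mpr h0
        have hv1 : (1 - β₂) * (β₂ ^ (n - j) * (d j i) ^ 2) ≤ v n i := by
          rw [hv n hn1 i]
          exact mul_le_mul_of_nonneg_left
            (Finset.single_le_sum (f := fun k => β₂ ^ (n - k) * (d k i) ^ 2)
              (fun k _ => by positivity) hj) h1β₂.le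
        have hv2 : v n i ≤ vhat t i := by
          rw [hvhat t ht1' i]
          exact Finset.le_sup' (fun s => v s i) (Finset.mem_Icc.mpr ⟨hn1, hnt⟩)
        have hsq : Real.sqrt (1 - β₂) * ((Real.sqrt β₂) ^ (n - j) * |d j i|) ≤
            Real.sqrt (vhat t i) := by
          have h' : Real.sqrt ((1 - β₂) * (β₂ ^ (n - j) * (d j i) ^ 2)) ≤
              Real.sqrt (vhat t i) := Real.sqrt_le_sqrt (hv1.trans hv2)
          rwa [Real.sqrt_mul h1β₂.le, Real.sqrt_mul (by positivity),
            sqrt_pow' hβ₂0.le, Real.sqrt_sq_eq_abs] at h'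
        have hden : 0 < Real.sqrt (1 - β₂) * ((Real.sqrt β₂) ^ (n - j) * |d j i|) := by
          positivity
        have step1 : β₁ ^ (n - j) * (d j i) ^ 2 / Real.sqrt (vhat t i) ≤
            β₁ ^ (n - j) * (d j i) ^ 2 /
              (Real.sqrt (1 - β₂) * ((Real.sqrt β₂) ^ (n - j) * |d j i|)) := by
          gcongr
        have step2 : β₁ ^ (n - j) * (d j i) ^ 2 /
            (Real.sqrt (1 - β₂) * ((Real.sqrt β₂) ^ (n - j) * |d j i|)) =
            μ ^ (n - j) * |d j i| / Real.sqrt (1 - β₂) := by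
          rw [hμ, div_pow]
          field_simp
          rw [← sq_abs (d j i)]
        exact step1.trans_eq step2
    calc (m n i) ^ 2 / Real.sqrt (vhat t i)
        ≤ ((1 / (1 - β₁)) * ∑ j ∈ Finset.Icc 1 n, β₁ ^ (n - j) * (d j i) ^ 2) /
            Real.sqrt (vhat t i) := by
          gcongr
          exact hCS.trans (mul_le_mul hS1 hS2
            hS2nn (by positivity))
      _ = (1 / (1 - β₁)) *
            ∑ j ∈ Finset.Icc 1 n, β₁ ^ (n - j) * (d j i) ^ 2 / Real.sqrt (vhat t i) := by
          rw [mul_div_assoc, Finset.sum_div]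
      _ ≤ (1 / (1 - β₁)) *
            ∑ j ∈ Finset.Icc 1 n, μ ^ (n - j) * |d j i| / Real.sqrt (1 - β₂) := by
          exact mul_le_mul_of_nonneg_left (Finset.sum_le_sum hperj) (by positivity)
      _ = C₁ * ∑ j ∈ Finset.Icc 1 n, μ ^ (n - j) * |d j i| := by
          rw [← Finset.sum_div, hC₁def]
          field_simp
  -- Cauchy-Schwarz + harmonic bound, per coordinate
  have L2 : ∀ i : Fin N, ∑ j ∈ Finset.Icc 1 T, |d j i| / Real.sqrt (j : ℝ) ≤
      Real.sqrt (1 + Real.log T) * Real.sqrt (∑ t ∈ Finset.Icc 1 T, (d t i) ^ 2) := by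
    intro i
    have hcs := Real.sum_mul_le_sqrt_mul_sqrt (Finset.Icc 1 T)
      (fun j => 1 / Real.sqrt (j : ℝ)) (fun j => |d j i|)
    have e0 : ∑ j ∈ Finset.Icc 1 T, |d j i| / Real.sqrt (j : ℝ) =
        ∑ j ∈ Finset.Icc 1 T, (1 / Real.sqrt (j : ℝ)) * |d j i| :=
      Finset.sum_congr rfl fun j _ => by rw [div_mul_eq_mul_div, one_mul]
    rw [e0]
    refine hcs.trans ?_
    have e1 : ∑ j ∈ Finset.Icc 1 T, (|d j i|) ^ 2 = ∑ t ∈ Finset.Icc 1 T, (d t i) ^ 2 :=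
      Finset.sum_congr rfl fun j _ => sq_abs _
    rw [e1]
    apply mul_le_mul_of_nonneg_right _ (Real.sqrt_nonneg _)
    apply Real.sqrt_le_sqrt
    have e2 : ∑ j ∈ Finset.Icc 1 T, (1 / Real.sqrt (j : ℝ)) ^ 2 =
        ∑ j ∈ Finset.Icc 1 T, ((j : ℝ))⁻¹ := by
      refine Finset.sum_congr rfl fun j hj => ?_
      rw [div_pow, one_pow, Real.sq_sqrt (Nat.cast_nonneg j), one_div]
    rw [e2]
    have hh := harmonic_le_one_add_log T
    rw [harmonic_eq_sum_Icc] at hh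
    push_cast at hh
    exact hh
  -- swap of summation and geometric bound, per coordinate
  have L3 : ∀ i : Fin N,
      ∑ t ∈ Finset.Icc (l + 1) T, ∑ j ∈ Finset.Icc 1 (t - l),
          μ ^ (t - l - j) * (|d j i| / Real.sqrt (j : ℝ)) ≤
        (1 / (1 - μ)) * ∑ j ∈ Finset.Icc 1 T, |d j i| / Real.sqrt (j : ℝ) := by
    intro i
    set w : ℕ → ℝ := fun j => |d j i| / Real.sqrt (j : ℝ) with hwdef
    have hw0 : ∀ j, 0 ≤ w j := fun j => by positivity
    have step1 : ∀ t ∈ Finset.Icc (l + 1) T,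
        ∑ j ∈ Finset.Icc 1 (t - l), μ ^ (t - l - j) * w j ≤
          ∑ j ∈ Finset.Icc 1 T, (if j + l ≤ t then μ ^ (t - l - j) * w j else 0) := by
      intro t ht
      obtain ⟨ht1, ht2⟩ := Finset.mem_Icc.mp ht
      have e : ∑ j ∈ Finset.Icc 1 (t - l), μ ^ (t - l - j) * w j =
          ∑ j ∈ Finset.Icc 1 (t - l), (if j + l ≤ t then μ ^ (t - l - j) * w j else 0) :=
        Finset.sum_congr rfl fun j hj => by
          have := Finset.mem_Icc.mp hj
          rw [if_pos (by omega)]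
      rw [e]
      apply Finset.sum_le_sum_of_subset_of_nonneg
      · exact Finset.Icc_subset_Icc_right (by omega)
      · intro j _ _
        split
        · have := hw0 j; positivity
        · exact le_rfl
    have step2 : ∀ j ∈ Finset.Icc 1 T,
        ∑ t ∈ Finset.Icc (l + 1) T, (if j + l ≤ t then μ ^ (t - l - j) * w j else 0) ≤
          (1 / (1 - μ)) * w j := by
      intro j hj
      obtain ⟨hj1, hj2⟩ := Finset.mem_Icc.mp hj
      rw [← Finset.sum_filter]
      have hfe : (Finset.Icc (l + 1) T).filter (fun t => j + l ≤ t) = Finset.Icc (j + l) T := by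
        ext t
        simp only [Finset.mem_filter, Finset.mem_Icc]
        omega
      rw [hfe]
      have e2 : ∑ t ∈ Finset.Icc (j + l) T, μ ^ (t - l - j) * w j =
          (∑ t ∈ Finset.Icc (j + l) T, μ ^ (t - (j + l))) * w j := by
        rw [Finset.sum_mul]
        exact Finset.sum_congr rfl fun t _ => by congr 2; omega
      rw [e2]
      exact mul_le_mul_of_nonneg_right (sum_pow_Icc_le hμ0 hμ1 (j + l) T) (hw0 j)
    calc ∑ t ∈ Finset.Icc (l + 1) T, ∑ j ∈ Finset.Icc 1 (t - l), μ ^ (t - l - j) * w j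
        ≤ ∑ t ∈ Finset.Icc (l + 1) T, ∑ j ∈ Finset.Icc 1 T,
            (if j + l ≤ t then μ ^ (t - l - j) * w j else 0) := Finset.sum_le_sum step1
      _ = ∑ j ∈ Finset.Icc 1 T, ∑ t ∈ Finset.Icc (l + 1) T,
            (if j + l ≤ t then μ ^ (t - l - j) * w j else 0) := Finset.sum_comm
      _ ≤ ∑ j ∈ Finset.Icc 1 T, (1 / (1 - μ)) * w j := Finset.sum_le_sum step2
      _ = (1 / (1 - μ)) * ∑ j ∈ Finset.Icc 1 T, w j := by rw [Finset.mul_sum]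
  -- per-t bound
  have stepT : ∀ t ∈ Finset.Icc (l + 1) T,
      (α / Real.sqrt t) * ∑ i : Fin N, (m (t - l) i) ^ 2 / Real.sqrt (vhat t i) ≤
        (α * C₁) * ∑ i : Fin N, ∑ j ∈ Finset.Icc 1 (t - l),
          μ ^ (t - l - j) * (|d j i| / Real.sqrt (j : ℝ)) := by
    intro t ht
    obtain ⟨ht1, ht2⟩ := Finset.mem_Icc.mp ht
    have htpos : (0:ℝ) < Real.sqrt (t : ℝ) :=
      Real.sqrt_pos.mpr (by exact_mod_cast (by omega : 0 < t))
    have h1 : ∑ i : Fin N, (m (t - l) i) ^ 2 / Real.sqrt (vhat t i) ≤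
        C₁ * ∑ i : Fin N, ∑ j ∈ Finset.Icc 1 (t - l), μ ^ (t - l - j) * |d j i| := by
      rw [Finset.mul_sum]
      exact Finset.sum_le_sum fun i _ => key t ht1 ht2 i
    calc (α / Real.sqrt t) * ∑ i : Fin N, (m (t - l) i) ^ 2 / Real.sqrt (vhat t i)
        ≤ (α / Real.sqrt t) *
            (C₁ * ∑ i : Fin N, ∑ j ∈ Finset.Icc 1 (t - l), μ ^ (t - l - j) * |d j i|) :=
          mul_le_mul_of_nonneg_left h1 (by positivity)
      _ = (α * C₁) * ∑ i : Fin N, ∑ j ∈ Finset.Icc 1 (t - l),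
            μ ^ (t - l - j) * (|d j i| / Real.sqrt (t : ℝ)) := by
          rw [show (α / Real.sqrt (t:ℝ)) *
              (C₁ * ∑ i : Fin N, ∑ j ∈ Finset.Icc 1 (t - l), μ ^ (t - l - j) * |d j i|) =
              (α * C₁) * ((∑ i : Fin N, ∑ j ∈ Finset.Icc 1 (t - l),
                μ ^ (t - l - j) * |d j i|) / Real.sqrt (t:ℝ)) from by ring]
          congr 1
          rw [Finset.sum_div]
          refine Finset.sum_congr rfl fun i _ => ?_
          rw [Finset.sum_div]
          exact Finset.sum_congr rfl fun j _ => by rw [mul_div_assoc]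
      _ ≤ (α * C₁) * ∑ i : Fin N, ∑ j ∈ Finset.Icc 1 (t - l),
            μ ^ (t - l - j) * (|d j i| / Real.sqrt (j : ℝ)) := by
          apply mul_le_mul_of_nonneg_left _ (by positivity)
          refine Finset.sum_le_sum fun i _ => Finset.sum_le_sum fun j hj => ?_
          obtain ⟨hj1, hj2⟩ := Finset.mem_Icc.mp hj
          have hjpos : (0:ℝ) < Real.sqrt (j : ℝ) :=
            Real.sqrt_pos.mpr (by exact_mod_cast (by omega : 0 < j))
          have hjt : Real.sqrt (j : ℝ) ≤ Real.sqrt (t : ℝ) :=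
            Real.sqrt_le_sqrt (by exact_mod_cast (by omega : j ≤ t))
          have hd : |d j i| / Real.sqrt (t:ℝ) ≤ |d j i| / Real.sqrt (j:ℝ) := by
            gcongr
          exact mul_le_mul_of_nonneg_left hd (pow_nonneg hμ0 _)
  -- assemble
  calc ∑ t ∈ Finset.Icc (l + 1) T,
        (α / Real.sqrt t) * ∑ i : Fin N, (m (t - l) i) ^ 2 / Real.sqrt (vhat t i)
      ≤ ∑ t ∈ Finset.Icc (l + 1) T, (α * C₁) * ∑ i : Fin N, ∑ j ∈ Finset.Icc 1 (t - l),
          μ ^ (t - l - j) * (|d j i| / Real.sqrt (j : ℝ)) := Finset.sum_le_sum stepT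
    _ = (α * C₁) * ∑ t ∈ Finset.Icc (l + 1) T, ∑ i : Fin N, ∑ j ∈ Finset.Icc 1 (t - l),
          μ ^ (t - l - j) * (|d j i| / Real.sqrt (j : ℝ)) := by rw [← Finset.mul_sum]
    _ = (α * C₁) * ∑ i : Fin N, ∑ t ∈ Finset.Icc (l + 1) T, ∑ j ∈ Finset.Icc 1 (t - l),
          μ ^ (t - l - j) * (|d j i| / Real.sqrt (j : ℝ)) := by rw [Finset.sum_comm]
    _ ≤ (α * C₁) * ∑ i : Fin N, (1 / (1 - μ)) *
          ∑ j ∈ Finset.Icc 1 T, |d j i| / Real.sqrt (j : ℝ) :=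
        mul_le_mul_of_nonneg_left (Finset.sum_le_sum fun i _ => L3 i) (by positivity)
    _ ≤ (α * C₁) * ∑ i : Fin N, (1 / (1 - μ)) *
          (Real.sqrt (1 + Real.log T) * Real.sqrt (∑ t ∈ Finset.Icc 1 T, (d t i) ^ 2)) :=
        mul_le_mul_of_nonneg_left
          (Finset.sum_le_sum fun i _ => mul_le_mul_of_nonneg_left (L2 i) (by positivity))
          (by positivity)
    _ = (α * Real.sqrt (1 + Real.log T)) /
          ((1 - β₁) * (1 - μ) * Real.sqrt (1 - β₂)) *
        ∑ i : Fin N, Real.sqrt (∑ t ∈ Finset.Icc 1 T, (d t i) ^ 2) := by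
        rw [← Finset.mul_sum, ← Finset.mul_sum, hC₁def]
        field_simp
end
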